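/- arXiv:1705.08581 — 4 statements merged into one kernel-verified Lean document; each statement's English description precedes it below -/
import Mathlib

section
/- For real a, b with 0 < a, 0 < b, a + b < 2 and a + b ≠ 1, the integral ∫₀¹ x^{-a-b} [ (1-x)^{a-1} − (1-x)^{b-1} ] dx converges and equals ((1-b)/(1-a-b)) · Γ(2-a-b)Γ(a)/Γ(2-b) − ((1-a)/(1-a-b)) · Γ(2-a-b)Γ(b)/Γ(2-a). -/
/-!
Put `s = a + b`, let `I` be the integrand and `H x = x ^ (1 - s) * ((1 - x) ^ a - (1 - x) ^ b)`.
Splitting `(1 - x) ^ a = (1 - x) ^ (a - 1) - x * (1 - x) ^ (a - 1)` gives, on `(0, 1)`,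
`H' = (1 - s) * I - (1 - b) * K a + (1 - a) * K b` with `K c x = x ^ (1 - s) * (1 - x) ^ (c - 1)`.
Since `H` tends to `0` at both endpoints, `(1 - s) * ∫ I = (1 - b) * B(2 - s, a) - (1 - a) * B(2 - s, b)`.
The inequality `|t ^ p - t ^ q| ≤ (1 + |p - q|) * (1 - t) * t ^ min p q` for `0 < t ≤ 1` dominates
`I` by a Beta integrand, which gives integrability, and bounds `H` by
`x ^ (2 - s) * (1 - x) ^ min a b`, which gives the boundary limits.
-/

open MeasureTheory Set Filter Topology

namespace Real

lemma ofReal_rpow_mul_one_sub_rpow {x : ℝ} (hx : x ∈ Icc (0 : ℝ) 1) (p q : ℝ) :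
    ((x ^ p * (1 - x) ^ q : ℝ) : ℂ) = (x : ℂ) ^ (p : ℂ) * (1 - (x : ℂ)) ^ (q : ℂ) := by
  push_cast
  rw [Complex.ofReal_cpow hx.1, Complex.ofReal_cpow (sub_nonneg.2 hx.2)]
  push_cast
  rfl

lemma integrableOn_rpow_mul_one_sub_rpow {u v : ℝ} (hu : 0 < u) (hv : 0 < v) :
    IntegrableOn (fun x : ℝ => x ^ (u - 1) * (1 - x) ^ (v - 1)) (Ioo 0 1) := by
  have h := Complex.betaIntegral_convergent (u := u) (v := v) (by simpa) (by simpa)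
  rw [intervalIntegrable_iff_integrableOn_Ioo_of_le zero_le_one] at h
  have h' := (h.congr_fun (fun x hx => by
    simpa using (ofReal_rpow_mul_one_sub_rpow (Ioo_subset_Icc_self hx) (u - 1) (v - 1)).symm)
    measurableSet_Ioo).re
  simpa [IntegrableOn] using h'

lemma integral_rpow_mul_one_sub_rpow {u v : ℝ} (hu : 0 < u) (hv : 0 < v) :
    ∫ x in Ioo (0 : ℝ) 1, x ^ (u - 1) * (1 - x) ^ (v - 1) = Gamma u * Gamma v / Gamma (u + v) := by
  have hbeta : ((∫ x in Ioo (0 : ℝ) 1, x ^ (u - 1) * (1 - x) ^ (v - 1) : ℝ) : ℂ)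
      = Complex.betaIntegral u v := by
    rw [← integral_Ioc_eq_integral_Ioo, ← intervalIntegral.integral_of_le zero_le_one,
      ← intervalIntegral.integral_ofReal, Complex.betaIntegral]
    refine intervalIntegral.integral_congr fun x hx => ?_
    rw [uIcc_of_le zero_le_one] at hx
    simpa using ofReal_rpow_mul_one_sub_rpow hx (u - 1) (v - 1)
  have hG := Complex.Gamma_mul_Gamma_eq_betaIntegral (s := u) (t := v) (by simpa) (by simpa)
  have hGuv : Gamma (u + v) ≠ 0 := (Gamma_pos_of_pos (add_pos hu hv)).ne'
  apply Complex.ofReal_injective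
  push_cast
  rw [hbeta, eq_div_iff (by exact_mod_cast hGuv), ← Complex.Gamma_ofReal, ← Complex.Gamma_ofReal,
    ← Complex.Gamma_ofReal, hG]
  push_cast
  ring

lemma abs_rpow_sub_rpow_le {t : ℝ} (ht₀ : 0 < t) (ht₁ : t ≤ 1) (p q : ℝ) :
    |t ^ p - t ^ q| ≤ (1 + |p - q|) * (1 - t) * t ^ min p q := by
  wlog hpq : p ≤ q generalizing p q
  · simpa [abs_sub_comm, min_comm] using this q p (le_of_not_ge hpq)
  have hd : 0 ≤ q - p := sub_nonneg.2 hpq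
  have hsplit : t ^ p - t ^ q = t ^ p * (1 - t ^ (q - p)) := by
    rw [mul_sub, mul_one, ← rpow_add ht₀, add_sub_cancel]
  have hle : t ^ (q - p) ≤ 1 := rpow_le_one ht₀.le ht₁ hd
  have hbern : 1 - t ^ (q - p) ≤ (1 + (q - p)) * (1 - t) := by
    rcases le_total 1 (q - p) with h | h
    · have := one_add_mul_self_le_rpow_one_add (s := t - 1) (by linarith) h
      rw [add_sub_cancel] at this
      nlinarith
    · have : t ^ (1 : ℝ) ≤ t ^ (q - p) := rpow_le_rpow_of_exponent_ge ht₀ ht₁ h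
      rw [rpow_one] at this
      nlinarith
  rw [hsplit, abs_of_nonneg (mul_nonneg (rpow_nonneg ht₀.le _) (by linarith)),
    min_eq_left hpq, abs_sub_comm p q, abs_of_nonneg hd]
  calc t ^ p * (1 - t ^ (q - p)) ≤ t ^ p * ((1 + (q - p)) * (1 - t)) :=
        mul_le_mul_of_nonneg_left hbern (rpow_nonneg ht₀.le _)
    _ = _ := by ring

lemma hasDerivAt_one_sub_rpow (c : ℝ) {x : ℝ} (hx : x < 1) :
    HasDerivAt (fun x : ℝ => (1 - x) ^ c) (-(c * (1 - x) ^ (c - 1))) x := by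
  simpa using ((hasDerivAt_id x).const_sub 1).rpow_const (p := c) (Or.inl (sub_pos.2 hx).ne')

end Real

open Real

namespace BetaDifference

variable {a b : ℝ}

lemma abs_integrand_le {x : ℝ} (hx : x ∈ Ioo (0 : ℝ) 1) :
    |x ^ (-a - b) * ((1 - x) ^ (a - 1) - (1 - x) ^ (b - 1))|
      ≤ (1 + |a - b|) * (x ^ (1 - a - b) * (1 - x) ^ (min a b - 1)) := by
  have h := abs_rpow_sub_rpow_le (sub_pos.2 hx.2) (by linarith [hx.1]) (a - 1) (b - 1)
  rw [sub_sub_sub_cancel_right, sub_sub_cancel, min_sub_sub_right] at h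
  have hx' : x ^ (1 - a - b) = x ^ (-a - b) * x := by
    rw [← rpow_add_one hx.1.ne']; ring_nf
  rw [abs_mul, abs_of_pos (rpow_pos_of_pos hx.1 _), hx']
  calc x ^ (-a - b) * |(1 - x) ^ (a - 1) - (1 - x) ^ (b - 1)|
      ≤ x ^ (-a - b) * ((1 + |a - b|) * x * (1 - x) ^ (min a b - 1)) :=
        mul_le_mul_of_nonneg_left h (rpow_nonneg hx.1.le _)
    _ = _ := by ring

lemma integrableOn_integrand (ha : 0 < a) (hb : 0 < b) (hab : a + b < 2) :
    IntegrableOn (fun x : ℝ => x ^ (-a - b) * ((1 - x) ^ (a - 1) - (1 - x) ^ (b - 1)))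
      (Ioo 0 1) := by
  have hbeta := integrableOn_rpow_mul_one_sub_rpow (u := 2 - a - b) (v := min a b)
    (by linarith) (lt_min ha hb)
  rw [show (2 : ℝ) - a - b - 1 = 1 - a - b by ring] at hbeta
  refine (hbeta.const_mul (1 + |a - b|)).mono' (by fun_prop) ?_
  filter_upwards [ae_restrict_mem measurableSet_Ioo] with x hx
  exact abs_integrand_le hx

lemma hasDerivAt_primitive {x : ℝ} (hx : x ∈ Ioo (0 : ℝ) 1) :
    HasDerivAt (fun x : ℝ => x ^ (1 - a - b) * ((1 - x) ^ a - (1 - x) ^ b))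
      ((1 - a - b) * (x ^ (-a - b) * ((1 - x) ^ (a - 1) - (1 - x) ^ (b - 1)))
        - (1 - b) * (x ^ (1 - a - b) * (1 - x) ^ (a - 1))
        + (1 - a) * (x ^ (1 - a - b) * (1 - x) ^ (b - 1))) x := by
  have hd := (hasDerivAt_rpow_const (p := 1 - a - b) (Or.inl hx.1.ne')).mul
    ((hasDerivAt_one_sub_rpow a hx.2).sub (hasDerivAt_one_sub_rpow b hx.2))
  refine hd.congr_deriv ?_
  have h1x : 1 - x ≠ 0 := (sub_pos.2 hx.2).ne'
  have ea : (1 - x) ^ a = (1 - x) ^ (a - 1) * (1 - x) := by rw [← rpow_add_one h1x]; ring_nf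
  have eb : (1 - x) ^ b = (1 - x) ^ (b - 1) * (1 - x) := by rw [← rpow_add_one h1x]; ring_nf
  have ex : x ^ (1 - a - b) = x ^ (-a - b) * x := by rw [← rpow_add_one hx.1.ne']; ring_nf
  simp only [Pi.sub_apply]
  rw [show 1 - a - b - 1 = -a - b by ring, ex, ea, eb]
  ring

lemma abs_primitive_le {x : ℝ} (hx : x ∈ Ioo (0 : ℝ) 1) :
    |x ^ (1 - a - b) * ((1 - x) ^ a - (1 - x) ^ b)|
      ≤ (1 + |a - b|) * (x ^ (2 - a - b) * (1 - x) ^ min a b) := by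
  have h := abs_rpow_sub_rpow_le (sub_pos.2 hx.2) (by linarith [hx.1]) a b
  rw [sub_sub_cancel] at h
  have hx' : x ^ (2 - a - b) = x ^ (1 - a - b) * x := by
    rw [← rpow_add_one hx.1.ne']; ring_nf
  rw [abs_mul, abs_of_pos (rpow_pos_of_pos hx.1 _), hx']
  calc x ^ (1 - a - b) * |(1 - x) ^ a - (1 - x) ^ b|
      ≤ x ^ (1 - a - b) * ((1 + |a - b|) * x * (1 - x) ^ min a b) :=
        mul_le_mul_of_nonneg_left h (rpow_nonneg hx.1.le _)
    _ = _ := by ring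

lemma tendsto_primitive_zero {c : ℝ} (ha : 0 < a) (hb : 0 < b) (hab : a + b < 2)
    (hc : c = 0 ∨ c = 1) :
    Tendsto (fun x : ℝ => x ^ (1 - a - b) * ((1 - x) ^ a - (1 - x) ^ b)) (𝓝[Ioo 0 1] c) (𝓝 0) := by
  have hbound : Continuous fun x : ℝ => (1 + |a - b|) * (x ^ (2 - a - b) * (1 - x) ^ min a b) :=
    continuous_const.mul (((continuous_rpow_const (by linarith)).mul
      ((continuous_rpow_const (lt_min ha hb).le).comp (continuous_const.sub continuous_id))))
  refine squeeze_zero_norm' (eventually_nhdsWithin_of_forall fun x hx => abs_primitive_le hx) ?_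
  have := (hbound.tendsto c).mono_left (nhdsWithin_le_nhds (s := Ioo 0 1))
  rcases hc with rfl | rfl
  · simpa [zero_rpow (show 2 - a - b ≠ 0 by linarith)] using this
  · simpa [zero_rpow (lt_min ha hb).ne'] using this

lemma one_sub_sub_mul_integral_integrand (ha : 0 < a) (hb : 0 < b) (hab : a + b < 2) :
    (1 - a - b) * ∫ x in Ioo (0 : ℝ) 1, x ^ (-a - b) * ((1 - x) ^ (a - 1) - (1 - x) ^ (b - 1))
      = (1 - b) * (Gamma (2 - a - b) * Gamma a / Gamma (2 - b))
        - (1 - a) * (Gamma (2 - a - b) * Gamma b / Gamma (2 - a)) := by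
  have hbeta {c : ℝ} (hc : 0 < c) :
      IntegrableOn (fun x : ℝ => x ^ (1 - a - b) * (1 - x) ^ (c - 1)) (Ioo 0 1) ∧
      ∫ x in Ioo (0 : ℝ) 1, x ^ (1 - a - b) * (1 - x) ^ (c - 1)
        = Gamma (2 - a - b) * Gamma c / Gamma (2 - a - b + c) := by
    have hu : 0 < 2 - a - b := by linarith
    rw [show 1 - a - b = 2 - a - b - 1 by ring]
    exact ⟨integrableOn_rpow_mul_one_sub_rpow hu hc, integral_rpow_mul_one_sub_rpow hu hc⟩
  obtain ⟨hKa, hKa'⟩ := hbeta ha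
  obtain ⟨hKb, hKb'⟩ := hbeta hb
  have hI := integrableOn_integrand ha hb hab
  have hftc := intervalIntegral.integral_eq_sub_of_hasDerivAt_of_tendsto zero_lt_one
    (fun x hx => hasDerivAt_primitive (a := a) (b := b) hx)
    ((intervalIntegrable_iff_integrableOn_Ioo_of_le zero_le_one).2
      (((hI.const_mul _).sub (hKa.const_mul _)).add (hKb.const_mul _)))
    (by simpa [nhdsWithin_Ioo_eq_nhdsGT zero_lt_one] using
      tendsto_primitive_zero ha hb hab (Or.inl rfl))
    (by simpa [nhdsWithin_Ioo_eq_nhdsLT zero_lt_one] using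
      tendsto_primitive_zero ha hb hab (Or.inr rfl))
  rw [intervalIntegral.integral_of_le zero_le_one, integral_Ioc_eq_integral_Ioo,
    integral_add ?sub (hKb.const_mul _), integral_sub (hI.const_mul _) (hKa.const_mul _),
    integral_const_mul, integral_const_mul, integral_const_mul, hKa', hKb'] at hftc
  case sub => exact (hI.const_mul _).sub (hKa.const_mul _)
  rw [show 2 - a - b + a = 2 - b by ring, show 2 - a - b + b = 2 - a by ring] at hftc
  linear_combination hftc

end BetaDifference

theorem stmt2 (a b : ℝ) (ha : 0 < a) (hb : 0 < b) (hab : a + b < 2) (hne : a + b ≠ 1) :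
    IntegrableOn (fun x : ℝ => x ^ (-a - b) * ((1 - x) ^ (a - 1) - (1 - x) ^ (b - 1)))
      (Set.Ioo 0 1) ∧
    (∫ x in Set.Ioo (0:ℝ) 1, x ^ (-a - b) * ((1 - x) ^ (a - 1) - (1 - x) ^ (b - 1))) =
      ((1 - b) / (1 - a - b)) * Real.Gamma (2 - a - b) * Real.Gamma a / Real.Gamma (2 - b)
      - ((1 - a) / (1 - a - b)) * Real.Gamma (2 - a - b) * Real.Gamma b / Real.Gamma (2 - a) := by
  refine ⟨BetaDifference.integrableOn_integrand ha hb hab, ?_⟩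
  have hs : 1 - a - b ≠ 0 := fun h => hne (by linarith)
  rw [← mul_right_inj' hs, BetaDifference.one_sub_sub_mul_integral_integrand ha hb hab]
  field_simp
end

section
/- For real a, b with 0 < a, 0 < b, a + b < 2 and a + b ≠ 1, the substitution y = 2/x − 1 gives the identity 2^{1-a-b} ∫₁^{∞} [ (y-1)^{a-1}(y+1)^{b-1} − (y+1)^{a-1}(y-1)^{b-1} ] dy = ∫₀¹ x^{-a-b} [ (1-x)^{a-1} − (1-x)^{b-1} ] dx, both integrals being convergent. -/
/-!
Under `y = 2 / x - 1` we have `y - 1 = 2 (1 - x) / x`, `y + 1 = 2 / x` and `|dy| = 2 / x² dx`,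
so `(y - 1) ^ p (y + 1) ^ q dy = 2 ^ (p + q + 1) x ^ (-p - q - 2) (1 - x) ^ p dx`; since the map is a
differentiable bijection of `(0, 1)` onto `(1, ∞)`, integrability and the integral
transfer between the two sides. The right-hand integrand is integrable on `(0, 1)`: near `0`,
`(1 - x) ^ c - 1 = O(x)` because `(1 - x) ^ c` is `C¹` on `[0, 1/2]`, which compensates
`x ^ (-a - b)` as `a + b < 2`; near `1`, `(1 - x) ^ c` is integrable for `c > -1`.
-/

open MeasureTheory Set

lemma exists_abs_one_sub_rpow_sub_one_le (c : ℝ) :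
    ∃ K : ℝ, ∀ x ∈ Icc (0 : ℝ) (1 / 2), |(1 - x) ^ c - 1| ≤ K * x := by
  have hdiff : ContDiffOn ℝ 1 (fun x : ℝ => (1 - x) ^ c) (Icc 0 (1 / 2)) := fun x hx =>
    (contDiffAt_const.sub contDiffAt_id).rpow_const_of_ne
      (by simp only [id]; linarith [hx.2]) |>.contDiffWithinAt
  obtain ⟨K, hK⟩ := hdiff.exists_lipschitzOnWith one_ne_zero (convex_Icc _ _) isCompact_Icc
  refine ⟨K, fun x hx => ?_⟩
  simpa [Real.dist_eq, abs_of_nonneg hx.1] using hK.dist_le_mul x hx 0 (by norm_num)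

lemma integrableOn_rpow_mul_one_sub_rpow_sub_one_Ioc_zero_half {s : ℝ} (hs : s < 2) (c : ℝ) :
    IntegrableOn (fun x : ℝ => x ^ (-s) * ((1 - x) ^ c - 1)) (Ioc 0 (1 / 2)) := by
  obtain ⟨K, hK⟩ := exists_abs_one_sub_rpow_sub_one_le c
  have hdom : IntegrableOn (fun x : ℝ => K * x ^ (1 - s)) (Ioc 0 (1 / 2)) := by
    have h := intervalIntegral.intervalIntegrable_rpow' (a := 0) (b := 1 / 2) (r := 1 - s)
      (by linarith)
    rw [intervalIntegrable_iff_integrableOn_Ioc_of_le (by norm_num)] at h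
    exact h.const_mul K
  refine hdom.mono' (by fun_prop) ((ae_restrict_iff' measurableSet_Ioc).2 ?_)
  filter_upwards with x ⟨hx0, hx1⟩
  have hxs : 0 < x ^ (-s) := Real.rpow_pos_of_pos hx0 _
  calc ‖x ^ (-s) * ((1 - x) ^ c - 1)‖ = x ^ (-s) * |(1 - x) ^ c - 1| := by
        rw [norm_mul, Real.norm_of_nonneg hxs.le, Real.norm_eq_abs]
    _ ≤ x ^ (-s) * (K * x) := by gcongr; exact hK x ⟨hx0.le, hx1⟩
    _ = K * x ^ (1 - s) := by
        rw [sub_eq_neg_add, Real.rpow_add hx0, Real.rpow_one]; ring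

lemma integrableOn_one_sub_rpow_Icc {c : ℝ} (hc : -1 < c) :
    IntegrableOn (fun x : ℝ => (1 - x) ^ c) (Icc (1 / 2) 1) := by
  have h := (intervalIntegral.intervalIntegrable_rpow' (a := 0) (b := 1 / 2) hc).comp_sub_left 1
  norm_num at h
  exact (intervalIntegrable_iff_integrableOn_Icc_of_le (by norm_num)).1 h.symm

lemma integrableOn_rpow_mul_one_sub_rpow_sub_one_Ioc_half_one (s : ℝ) {c : ℝ} (hc : -1 < c) :
    IntegrableOn (fun x : ℝ => x ^ (-s) * ((1 - x) ^ c - 1)) (Ioc (1 / 2) 1) := by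
  refine IntegrableOn.mono_set ?_ Ioc_subset_Icc_self
  refine IntegrableOn.continuousOn_mul (fun x hx => ?_)
    ((integrableOn_one_sub_rpow_Icc hc).sub (integrableOn_const (by simp))) isCompact_Icc
  exact (Real.continuousAt_rpow_const _ _ (Or.inl (by linarith [hx.1]))).continuousWithinAt

lemma integrableOn_rpow_mul_one_sub_rpow_sub_one {s c : ℝ} (hs : s < 2) (hc : -1 < c) :
    IntegrableOn (fun x : ℝ => x ^ (-s) * ((1 - x) ^ c - 1)) (Ioc 0 1) := by
  rw [← Ioc_union_Ioc_eq_Ioc (by norm_num : (0 : ℝ) ≤ 1 / 2) (by norm_num)]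
  exact (integrableOn_rpow_mul_one_sub_rpow_sub_one_Ioc_zero_half hs c).union
    (integrableOn_rpow_mul_one_sub_rpow_sub_one_Ioc_half_one s hc)

lemma hasDerivAt_two_div_sub_one {x : ℝ} (hx : x ≠ 0) :
    HasDerivAt (fun x : ℝ => 2 / x - 1) (-(2 / x ^ 2)) x := by
  simpa [div_eq_mul_inv] using ((hasDerivAt_inv hx).const_mul 2).sub_const 1

lemma injOn_two_div_sub_one : InjOn (fun x : ℝ => 2 / x - 1) (Ioo 0 1) := by
  intro x hx y hy hxy
  have h : 2 / x = 2 / y := by simpa using hxy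
  rw [div_eq_div_iff hx.1.ne' hy.1.ne'] at h
  linarith

lemma image_two_div_sub_one_Ioo : (fun x : ℝ => 2 / x - 1) '' Ioo 0 1 = Ioi 1 := by
  ext y
  simp only [mem_image, mem_Ioo, mem_Ioi]
  constructor
  · rintro ⟨x, ⟨hx0, hx1⟩, rfl⟩
    linarith [(lt_div_iff₀ hx0).2 (by linarith : 2 * x < 2)]
  · intro hy
    refine ⟨2 / (y + 1), ⟨by positivity, (div_lt_one (by linarith)).2 (by linarith)⟩, ?_⟩
    field_simp
    ring

lemma integrableOn_Ioi_one_iff_comp_two_div_sub_one (g : ℝ → ℝ) :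
    IntegrableOn g (Ioi 1) ↔ IntegrableOn (fun x => 2 / x ^ 2 * g (2 / x - 1)) (Ioo 0 1) := by
  rw [← image_two_div_sub_one_Ioo, integrableOn_image_iff_integrableOn_abs_deriv_smul
    measurableSet_Ioo (fun x hx => (hasDerivAt_two_div_sub_one hx.1.ne').hasDerivWithinAt)
    injOn_two_div_sub_one]
  refine integrableOn_congr_fun (fun x hx => ?_) measurableSet_Ioo
  rw [abs_neg, abs_of_nonneg (by positivity), smul_eq_mul]

lemma integral_Ioi_one_eq_comp_two_div_sub_one (g : ℝ → ℝ) :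
    ∫ y in Ioi 1, g y = ∫ x in Ioo 0 1, 2 / x ^ 2 * g (2 / x - 1) := by
  rw [← image_two_div_sub_one_Ioo, integral_image_eq_integral_abs_deriv_smul
    measurableSet_Ioo (fun x hx => (hasDerivAt_two_div_sub_one hx.1.ne').hasDerivWithinAt)
    injOn_two_div_sub_one]
  refine setIntegral_congr_fun measurableSet_Ioo (fun x hx => ?_)
  rw [abs_neg, abs_of_nonneg (by positivity), smul_eq_mul]

lemma two_div_sq_mul_rpow_sub_one_mul_rpow_add_one {x : ℝ} (hx0 : 0 < x) (hx1 : x < 1)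
    (p q : ℝ) :
    2 / x ^ 2 * ((2 / x - 1 - 1) ^ p * (2 / x - 1 + 1) ^ q) =
      2 ^ (p + q + 1) * (x ^ (-p - q - 2) * (1 - x) ^ p) := by
  have h1x : 0 < 1 - x := by linarith
  rw [show 2 / x - 1 - 1 = 2 * (1 - x) / x by field_simp; ring, show 2 / x - 1 + 1 = 2 / x by ring,
    Real.div_rpow (by positivity) hx0.le, Real.div_rpow (by norm_num) hx0.le,
    Real.mul_rpow (by norm_num) h1x.le, Real.rpow_add (by norm_num), Real.rpow_add (by norm_num),
    Real.rpow_sub hx0, Real.rpow_sub hx0, Real.rpow_neg hx0.le, Real.rpow_one]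
  field_simp
  norm_cast

lemma two_div_sq_mul_rpow_comp_two_div_sub_one {x : ℝ} (hx0 : 0 < x) (hx1 : x < 1) (a b : ℝ) :
    2 / x ^ 2 * ((2 / x - 1 - 1) ^ (a - 1) * (2 / x - 1 + 1) ^ (b - 1) -
        (2 / x - 1 + 1) ^ (a - 1) * (2 / x - 1 - 1) ^ (b - 1)) =
      2 ^ (a + b - 1) * (x ^ (-a - b) * ((1 - x) ^ (a - 1) - (1 - x) ^ (b - 1))) := by
  rw [mul_sub, mul_comm ((2 / x - 1 + 1) ^ (a - 1)),
    two_div_sq_mul_rpow_sub_one_mul_rpow_add_one hx0 hx1,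
    two_div_sq_mul_rpow_sub_one_mul_rpow_add_one hx0 hx1]
  ring_nf

theorem stmt3_general (a b : ℝ) (ha : 0 < a) (hb : 0 < b) (hab : a + b < 2) :
    IntegrableOn
      (fun y : ℝ => (y - 1) ^ (a - 1) * (y + 1) ^ (b - 1) - (y + 1) ^ (a - 1) * (y - 1) ^ (b - 1))
      (Set.Ioi 1) ∧
    IntegrableOn (fun x : ℝ => x ^ (-a - b) * ((1 - x) ^ (a - 1) - (1 - x) ^ (b - 1)))
      (Set.Ioo 0 1) ∧
    (2 : ℝ) ^ (1 - a - b) *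
      (∫ y in Set.Ioi (1:ℝ),
        ((y - 1) ^ (a - 1) * (y + 1) ^ (b - 1) - (y + 1) ^ (a - 1) * (y - 1) ^ (b - 1))) =
    ∫ x in Set.Ioo (0:ℝ) 1, x ^ (-a - b) * ((1 - x) ^ (a - 1) - (1 - x) ^ (b - 1)) := by
  have hsubst := fun x (hx : x ∈ Ioo (0 : ℝ) 1) =>
    two_div_sq_mul_rpow_comp_two_div_sub_one hx.1 hx.2 a b
  have hrhs : IntegrableOn (fun x : ℝ => x ^ (-a - b) * ((1 - x) ^ (a - 1) - (1 - x) ^ (b - 1)))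
      (Ioo 0 1) := by
    refine (((integrableOn_rpow_mul_one_sub_rpow_sub_one hab (by linarith : -1 < a - 1)).sub
      (integrableOn_rpow_mul_one_sub_rpow_sub_one hab (by linarith : -1 < b - 1))).mono_set
      Ioo_subset_Ioc_self).congr_fun (fun x _ => ?_) measurableSet_Ioo
    simp only [Pi.sub_apply]
    ring_nf
  refine ⟨(integrableOn_Ioi_one_iff_comp_two_div_sub_one _).2
      (IntegrableOn.congr_fun (hrhs.const_mul _) (fun x hx => (hsubst x hx).symm)
        measurableSet_Ioo),
    hrhs, ?_⟩
  rw [integral_Ioi_one_eq_comp_two_div_sub_one, setIntegral_congr_fun measurableSet_Ioo hsubst,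
    integral_const_mul, ← mul_assoc, ← Real.rpow_add two_pos,
    show 1 - a - b + (a + b - 1) = 0 by ring, Real.rpow_zero, one_mul]

theorem stmt3 (a b : ℝ) (ha : 0 < a) (hb : 0 < b) (hab : a + b < 2) (hne : a + b ≠ 1) :
    IntegrableOn
      (fun y : ℝ => (y - 1) ^ (a - 1) * (y + 1) ^ (b - 1) - (y + 1) ^ (a - 1) * (y - 1) ^ (b - 1))
      (Set.Ioi 1) ∧
    IntegrableOn (fun x : ℝ => x ^ (-a - b) * ((1 - x) ^ (a - 1) - (1 - x) ^ (b - 1)))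
      (Set.Ioo 0 1) ∧
    (2 : ℝ) ^ (1 - a - b) *
      (∫ y in Set.Ioi (1:ℝ),
        ((y - 1) ^ (a - 1) * (y + 1) ^ (b - 1) - (y + 1) ^ (a - 1) * (y - 1) ^ (b - 1))) =
    ∫ x in Set.Ioo (0:ℝ) 1, x ^ (-a - b) * ((1 - x) ^ (a - 1) - (1 - x) ^ (b - 1)) :=
  stmt3_general a b ha hb hab
end

section
/- Let β > 0, ε > 0, 0 < Δ < 1/2, and b > 0. Define G^ε(τ) = (b/(2i sin(πΔ))) [ (β/π · sinh(π(ε − iτ)/β))^{-2Δ} − (β/π · sinh(π(ε + iτ)/β))^{-2Δ} ] using principal complex powers, for τ ∈ (−β/2, β/2). Then for every fixed τ ∈ (−β/2, β/2) with τ ≠ 0, lim_{ε→0⁺} G^ε(τ) = b · sgn(τ) / |β/π · sin(πτ/β)|^{2Δ}. -/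
/-! At `ε = 0` the two arguments of the powers are `∓ i s` with `s = (β/π) sin(πτ/β) ≠ 0`; they
lie off the branch cut, so the expression is continuous in `ε` there and the limit is its value
at `ε = 0`. For the principal branch `(∓ i s) ^ a = |s| ^ a e ^ {∓ i π a sgn(s) / 2}`, so the
difference of the two powers is `2 i sin(πΔ) sgn(s) |s| ^ (-2Δ)`, and `sgn s = sgn τ`. -/

open Complex
open scoped Real

namespace Complex

lemma ofReal_mul_I_cpow {r : ℝ} (hr : 0 < r) (a : ℂ) :
    ((r : ℂ) * I) ^ a = (r : ℂ) ^ a * exp (a * (π / 2) * I) := by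
  rw [cpow_def_of_ne_zero (mul_ne_zero (ofReal_ne_zero.mpr hr.ne') I_ne_zero),
    log_ofReal_mul hr I_ne_zero, log_I, cpow_def_of_ne_zero (ofReal_ne_zero.mpr hr.ne'),
    ← ofReal_log hr.le, ← exp_add]
  ring_nf

lemma ofReal_mul_neg_I_cpow {r : ℝ} (hr : 0 < r) (a : ℂ) :
    ((r : ℂ) * -I) ^ a = (r : ℂ) ^ a * exp (-(a * (π / 2)) * I) := by
  rw [cpow_def_of_ne_zero (mul_ne_zero (ofReal_ne_zero.mpr hr.ne') (neg_ne_zero.mpr I_ne_zero)),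
    log_ofReal_mul hr (neg_ne_zero.mpr I_ne_zero), log_neg_I,
    cpow_def_of_ne_zero (ofReal_ne_zero.mpr hr.ne'), ← ofReal_log hr.le, ← exp_add]
  ring_nf

lemma ofReal_mul_neg_I_cpow_sub_ofReal_mul_I_cpow {r : ℝ} (hr : 0 < r) (a : ℂ) :
    ((r : ℂ) * -I) ^ a - ((r : ℂ) * I) ^ a = -2 * I * sin (a * (π / 2)) * (r : ℂ) ^ a := by
  rw [ofReal_mul_I_cpow hr, ofReal_mul_neg_I_cpow hr, sin]
  ring_nf
  rw [I_sq]
  ring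

lemma neg_I_mul_cpow_sub_I_mul_cpow {s : ℝ} (hs : s ≠ 0) (a : ℂ) :
    (-I * s) ^ a - (I * s) ^ a =
      -2 * I * sin (a * (π / 2)) * Real.sign s * ((|s| : ℝ) : ℂ) ^ a := by
  rcases hs.lt_or_gt with hneg | hpos
  · have key := ofReal_mul_neg_I_cpow_sub_ofReal_mul_I_cpow (neg_pos.mpr hneg) a
    rw [Real.sign_of_neg hneg, abs_of_neg hneg]
    push_cast at key ⊢
    rw [show -I * s = -s * I by ring, show I * s = -s * -I by ring]
    linear_combination -key
  · have key := ofReal_mul_neg_I_cpow_sub_ofReal_mul_I_cpow hpos a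
    rw [Real.sign_of_pos hpos, abs_of_pos hpos]
    push_cast
    rw [mul_comm (-I), mul_comm I]
    linear_combination key

lemma neg_I_mul_cpow_sub_I_mul_cpow_neg_two_mul {s : ℝ} (hs : s ≠ 0) (Δ : ℝ) :
    (-I * s) ^ (-(2 * Δ) : ℂ) - (I * s) ^ (-(2 * Δ) : ℂ) =
      2 * I * Real.sin (π * Δ) * ((Real.sign s / |s| ^ (2 * Δ) : ℝ) : ℂ) := by
  have hpow : ((|s| : ℝ) : ℂ) ^ (-(2 * Δ) : ℂ) = ((|s| ^ (2 * Δ))⁻¹ : ℝ) := by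
    rw [← Real.rpow_neg (abs_nonneg s), ofReal_cpow (abs_nonneg s)]
    push_cast
    rfl
  rw [neg_I_mul_cpow_sub_I_mul_cpow hs, hpow,
    show -(2 * (Δ : ℂ)) * (π / 2) = ((-(π * Δ) : ℝ) : ℂ) by push_cast; ring,
    ← ofReal_sin, Real.sin_neg]
  push_cast
  ring

lemma ofReal_div_pi_mul_sinh_I_mul (β τ : ℝ) :
    ((β / π : ℝ) : ℂ) * sinh (π * (I * τ) / β) = I * ((β / π * Real.sin (π * τ / β) : ℝ) : ℂ) := by
  rw [show (π : ℂ) * (I * τ) / β = ((π * τ / β : ℝ) : ℂ) * I by push_cast; ring, sinh_mul_I,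
    ← ofReal_sin]
  push_cast
  ring

end Complex

namespace Real

lemma sign_mul_of_pos {k : ℝ} (hk : 0 < k) (x : ℝ) : sign (k * x) = sign x := by
  rcases lt_trichotomy x 0 with hx | rfl | hx
  · rw [sign_of_neg hx, sign_of_neg (mul_neg_of_pos_of_neg hk hx)]
  · simp
  · rw [sign_of_pos hx, sign_of_pos (mul_pos hk hx)]

lemma sign_sin {x : ℝ} (hx : x ∈ Set.Ioo (-π) π) : sign (sin x) = sign x := by
  rcases lt_trichotomy x 0 with h | rfl | h
  · rw [sign_of_neg h, sign_of_neg (sin_neg_of_neg_of_neg_pi_lt h hx.1)]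
  · simp
  · rw [sign_of_pos h, sign_of_pos (sin_pos_of_pos_of_lt_pi h hx.2)]

lemma sign_div_pi_mul_sin_pi_mul_div {β τ : ℝ} (hβ : 0 < β) (hτ : τ ∈ Set.Ioo (-β) β) :
    sign (β / π * sin (π * τ / β)) = sign τ := by
  have hx : π * τ / β ∈ Set.Ioo (-π) π := by
    constructor
    · rw [lt_div_iff₀ hβ]; nlinarith [hτ.1, pi_pos]
    · rw [div_lt_iff₀ hβ]; nlinarith [hτ.2, pi_pos]
  rw [sign_mul_of_pos (by positivity), sign_sin hx, mul_div_right_comm,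
    sign_mul_of_pos (by positivity)]

end Real

theorem stmt9_general (β Δ b : ℝ) (hβ : 0 < β) (h1 : 0 < Δ) (h2 : Δ < 1/2)
    (τ : ℝ) (hτ : τ ∈ Set.Ioo (-(β/2)) (β/2)) (hτ0 : τ ≠ 0) :
    Filter.Tendsto (fun ε : ℝ =>
      ((b : ℂ) / (2 * Complex.I * (Real.sin (Real.pi * Δ) : ℂ))) *
        ((((β / Real.pi : ℝ) : ℂ) *
            Complex.sinh ((Real.pi : ℂ) * ((ε : ℂ) - Complex.I * τ) / (β : ℂ))) ^ (-(2 * Δ) : ℂ)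
          - (((β / Real.pi : ℝ) : ℂ) *
            Complex.sinh ((Real.pi : ℂ) * ((ε : ℂ) + Complex.I * τ) / (β : ℂ))) ^ (-(2 * Δ) : ℂ)))
      (nhdsWithin 0 (Set.Ioi 0))
      (nhds ((b * Real.sign τ / |β / Real.pi * Real.sin (Real.pi * τ / β)| ^ (2 * Δ) : ℝ) : ℂ)) := by
  set s := β / π * Real.sin (π * τ / β)
  have hsign : Real.sign s = Real.sign τ :=
    Real.sign_div_pi_mul_sin_pi_mul_div hβ ⟨by linarith [hτ.1], by linarith [hτ.2]⟩
  have hs : s ≠ 0 := fun h => hτ0 (Real.sign_eq_zero_iff.mp (by rw [← hsign, h, Real.sign_zero]))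
  have hdenom : 2 * I * (Real.sin (π * Δ) : ℂ) ≠ 0 := mul_ne_zero (mul_ne_zero two_ne_zero I_ne_zero)
    (ofReal_ne_zero.mpr (Real.sin_pos_of_pos_of_lt_pi (by positivity) (by nlinarith [Real.pi_pos])).ne')
  have hA : ((β / π : ℝ) : ℂ) * sinh (π * (((0 : ℝ) : ℂ) - I * τ) / β) = -I * s := by
    rw [ofReal_zero, zero_sub, mul_neg, neg_div, sinh_neg, mul_neg, ofReal_div_pi_mul_sinh_I_mul,
      neg_mul]
  have hB : ((β / π : ℝ) : ℂ) * sinh (π * (((0 : ℝ) : ℂ) + I * τ) / β) = I * s := by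
    rw [ofReal_zero, zero_add, ofReal_div_pi_mul_sinh_I_mul]
  convert (ContinuousAt.tendsto ?_).mono_left nhdsWithin_le_nhds using 2
  · rw [hA, hB, neg_I_mul_cpow_sub_I_mul_cpow_neg_two_mul hs, hsign, ← mul_assoc,
      div_mul_cancel₀ _ hdenom]
    push_cast
    ring
  · exact continuousAt_const.mul ((ContinuousAt.cpow (by fun_prop) continuousAt_const
      (by rw [hA]; simp [mem_slitPlane_iff, hs])).sub
      (ContinuousAt.cpow (by fun_prop) continuousAt_const (by rw [hB]; simp [mem_slitPlane_iff, hs])))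

theorem stmt9 (β Δ b : ℝ) (hβ : 0 < β) (h1 : 0 < Δ) (h2 : Δ < 1/2) (hb : 0 < b)
    (τ : ℝ) (hτ : τ ∈ Set.Ioo (-(β/2)) (β/2)) (hτ0 : τ ≠ 0) :
    Filter.Tendsto (fun ε : ℝ =>
      ((b : ℂ) / (2 * Complex.I * (Real.sin (Real.pi * Δ) : ℂ))) *
        ((((β / Real.pi : ℝ) : ℂ) *
            Complex.sinh ((Real.pi : ℂ) * ((ε : ℂ) - Complex.I * τ) / (β : ℂ))) ^ (-(2 * Δ) : ℂ)
          - (((β / Real.pi : ℝ) : ℂ) *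
            Complex.sinh ((Real.pi : ℂ) * ((ε : ℂ) + Complex.I * τ) / (β : ℂ))) ^ (-(2 * Δ) : ℂ)))
      (nhdsWithin 0 (Set.Ioi 0))
      (nhds ((b * Real.sign τ / |β / Real.pi * Real.sin (Real.pi * τ / β)| ^ (2 * Δ) : ℝ) : ℂ)) :=
  stmt9_general β Δ b hβ h1 h2 τ hτ hτ0
end

section
/- Let β > 0, ε > 0, 0 < Δ < 1/2, b > 0, and let G^ε(τ) be defined as (b/(2i sin(πΔ))) [ (β/π · sinh(π(ε − iτ)/β))^{-2Δ} − (β/π · sinh(π(ε + iτ)/β))^{-2Δ} ] with principal complex powers. Then G^ε is real-valued, antisymmetric (G^ε(−τ) = −G^ε(τ)), and G^ε(τ) ≥ 0 for 0 ≤ τ ≤ β/2. -/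
/-!
Put `w τ = (β/π) sinh(π(ε - iτ)/β)`; the second power in `G τ` is that of `conj (w τ)`.
For `|τ| ≤ β/2` we have `Re w τ ≥ 0`, so `w τ` is off the branch cut and the principal power
commutes with conjugation: `G τ = b Im((w τ)^(-2Δ)) / sin(πΔ)` is real.
For `0 ≤ τ ≤ β/2`, `w τ` lies in the closed fourth quadrant, so `(w τ)^(-2Δ)` has argument
`-2Δ arg (w τ) ∈ [0, π]` and nonnegative imaginary part.
-/

open Complex ComplexConjugate Set Real

namespace Complex

theorem sinh_re (z : ℂ) : (sinh z).re = Real.sinh z.re * Real.cos z.im := by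
  conv_lhs => rw [← re_add_im z]
  rw [sinh_add, sinh_mul_I, cosh_mul_I, ← ofReal_sinh, ← ofReal_cosh, ← ofReal_sin, ← ofReal_cos]
  simp only [add_re, mul_re, ofReal_re, ofReal_im, I_re, I_im]
  ring

theorem sinh_im (z : ℂ) : (sinh z).im = Real.cosh z.re * Real.sin z.im := by
  conv_lhs => rw [← re_add_im z]
  rw [sinh_add, sinh_mul_I, cosh_mul_I, ← ofReal_sinh, ← ofReal_cosh, ← ofReal_sin, ← ofReal_cos]
  simp only [add_im, mul_im, mul_re, ofReal_re, ofReal_im, I_re, I_im]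
  ring

theorem sinh_re_nonneg {z : ℂ} (hre : 0 ≤ z.re) (him : |z.im| ≤ π / 2) : 0 ≤ (sinh z).re := by
  rw [sinh_re]
  exact mul_nonneg (Real.sinh_nonneg_iff.2 hre) (Real.cos_nonneg_of_mem_Icc (abs_le.1 him))

theorem sinh_im_nonpos {z : ℂ} (h₁ : -π ≤ z.im) (h₂ : z.im ≤ 0) : (sinh z).im ≤ 0 := by
  rw [sinh_im]
  exact mul_nonpos_of_nonneg_of_nonpos (Real.cosh_pos _).le
    (sin_nonpos_of_nonpos_of_neg_pi_le h₂ h₁)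

theorem arg_mem_Icc_of_re_nonneg_of_im_nonpos {z : ℂ} (hre : 0 ≤ z.re) (him : z.im ≤ 0) :
    arg z ∈ Icc (-(π / 2)) 0 := by
  refine ⟨neg_pi_div_two_le_arg_iff.2 (Or.inl hre), ?_⟩
  rcases him.lt_or_eq with hlt | heq
  · exact (arg_neg_iff.2 hlt).le
  · exact (arg_eq_zero_iff.2 ⟨hre, heq⟩).le

theorem cpow_ofReal_im_nonneg {x : ℂ} (hx : arg x ∈ Icc (-(π / 2)) 0) {y : ℝ}
    (hy : y ∈ Icc (-2) 0) : 0 ≤ (x ^ (y : ℂ)).im := by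
  rw [cpow_ofReal_im]
  refine mul_nonneg (Real.rpow_nonneg (norm_nonneg x) y) (Real.sin_nonneg_of_nonneg_of_le_pi ?_ ?_)
  · nlinarith [hx.2, hy.2]
  · nlinarith [mul_nonneg (neg_le_iff_add_nonneg.1 hx.1) (neg_nonneg.2 hy.2), hy.1, pi_pos]

theorem cpow_ofReal_sub_conj_cpow {x : ℂ} (hx : arg x ≠ π) (y : ℝ) :
    x ^ (y : ℂ) - conj x ^ (y : ℂ) = (2 * (x ^ (y : ℂ)).im : ℝ) * I := by
  rw [conj_cpow x _ hx, conj_ofReal, sub_conj]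

end Complex

theorem stmt10 (β ε Δ b : ℝ) (hβ : 0 < β) (hε : 0 < ε) (h1 : 0 < Δ) (h2 : Δ < 1/2) (hb : 0 < b)
    (G : ℝ → ℂ)
    (hG : ∀ τ : ℝ, G τ =
      ((b : ℂ) / (2 * Complex.I * (Real.sin (Real.pi * Δ) : ℂ))) *
        ((((β / Real.pi : ℝ) : ℂ) *
            Complex.sinh ((Real.pi : ℂ) * ((ε : ℂ) - Complex.I * τ) / (β : ℂ))) ^ (-(2 * Δ) : ℂ)
          - (((β / Real.pi : ℝ) : ℂ) *
            Complex.sinh ((Real.pi : ℂ) * ((ε : ℂ) + Complex.I * τ) / (β : ℂ))) ^ (-(2 * Δ) : ℂ))) :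
    (∀ τ : ℝ, |τ| ≤ β / 2 → (G τ).im = 0) ∧
    (∀ τ : ℝ, G (-τ) = -G τ) ∧
    (∀ τ : ℝ, 0 ≤ τ → τ ≤ β / 2 → 0 ≤ (G τ).re) := by
  have hs : 0 < Real.sin (π * Δ) := sin_pos_of_pos_of_lt_pi (by positivity) (by nlinarith [pi_pos])
  set p : ℝ := -(2 * Δ) with hp
  have hpC : (-(2 * Δ) : ℂ) = (p : ℂ) := by push_cast [hp]; rfl
  set u : ℝ → ℂ := fun τ => π * (ε - I * τ) / β with hu
  have hu_re (τ : ℝ) : (u τ).re = π * ε / β := by simp [hu, div_ofReal_re]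
  have hu_im (τ : ℝ) : (u τ).im = -(π * τ / β) := by simp [hu, div_ofReal_im]; ring
  set z : ℝ → ℂ := fun τ => ((β / π : ℝ) : ℂ) * sinh (u τ) with hz
  have hconj (τ : ℝ) : ((β / π : ℝ) : ℂ) * sinh (π * (ε + I * τ) / β) = conj (z τ) := by
    simp only [hz, hu, map_mul, ← sinh_conj, map_div₀, map_sub, conj_ofReal, conj_I]
    ring_nf
  have hsinh_re (τ : ℝ) (hτ : |τ| ≤ β / 2) : 0 ≤ (sinh (u τ)).re := by
    refine sinh_re_nonneg (hu_re τ ▸ by positivity) ?_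
    rw [hu_im, abs_neg, abs_div, abs_mul, abs_of_pos pi_pos, abs_of_pos hβ, div_le_iff₀ hβ]
    nlinarith [pi_pos]
  have hG_ofReal (τ : ℝ) (hτ : |τ| ≤ β / 2) :
      G τ = ((b / Real.sin (π * Δ) * (z τ ^ (p : ℂ)).im : ℝ) : ℂ) := by
    have harg : arg (z τ) ≠ π := fun h =>
      (arg_eq_pi_iff.1 h).1.not_ge (re_ofReal_mul _ _ ▸ mul_nonneg (by positivity) (hsinh_re τ hτ))
    rw [hG, hconj, hpC, cpow_ofReal_sub_conj_cpow harg]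
    push_cast
    field_simp
  refine ⟨fun τ hτ => by rw [hG_ofReal τ hτ, ofReal_im], fun τ => ?_, fun τ h₀ hτ => ?_⟩
  · simp only [hG, ofReal_neg, mul_neg, ← sub_eq_add_neg, sub_neg_eq_add]
    ring
  · have hτ' : |τ| ≤ β / 2 := abs_le.2 ⟨by linarith, hτ⟩
    have hsinh_im : (sinh (u τ)).im ≤ 0 := by
      refine sinh_im_nonpos ?_ (hu_im τ ▸ neg_nonpos.2 (by positivity))
      rw [hu_im, neg_le_neg_iff, div_le_iff₀ hβ]
      nlinarith [pi_pos]
    rw [hG_ofReal τ hτ', ofReal_re, hz]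
    refine mul_nonneg (div_nonneg hb.le hs.le) (cpow_ofReal_im_nonneg ?_ ⟨by linarith, by linarith⟩)
    rw [arg_real_mul _ (by positivity)]
    exact arg_mem_Icc_of_re_nonneg_of_im_nonpos (hsinh_re τ hτ') hsinh_im
end
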